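/- Let Ω ⊆ ℝ³ be a nonempty open set and A ⊆ Ω a subset that is closed in Ω and discrete. Then there exists a set A′ with A ⊆ A′ ⊆ Ω such that A′ is closed in Ω and discrete, and the closure of A′ in ℝ³ equals A′ ∪ ∂Ω. -/
import Mathlib

open Set

lemma aux_closure {X : Type*} [MetricSpace X] [ProperSpace X]
    (Ω S : Set (EuclideanSpace ℝ (Fin 3))) (hΩo : IsOpen Ω) (hS : S ⊆ Ω)
    (hfin : ∀ K : Set (EuclideanSpace ℝ (Fin 3)), K ⊆ Ω → IsCompact K → (S ∩ K).Finite) :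
    closure S ⊆ S ∪ frontier Ω := by
  intro y hy
  have hyΩc : y ∈ closure Ω := closure_mono hS hy
  by_cases hyΩ : y ∈ Ω
  · left
    obtain ⟨r, hr, hball⟩ := Metric.isOpen_iff.1 hΩo y hyΩ
    set K := Metric.closedBall y (r/2) with hK
    have hKΩ : K ⊆ Ω := fun z hz => hball (Metric.mem_ball.2 (lt_of_le_of_lt (Metric.mem_closedBall.1 hz) (by linarith)))
    have hF : (S ∩ K).Finite := hfin K hKΩ (isCompact_closedBall y _)
    have hclosed : IsClosed ((S ∩ K) ∪ (Metric.ball y (r/2))ᶜ) :=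
      hF.isClosed.union Metric.isOpen_ball.isClosed_compl
    have hsub : S ⊆ (S ∩ K) ∪ (Metric.ball y (r/2))ᶜ := fun z hz => by
      by_cases hzK : z ∈ K
      · exact Or.inl ⟨hz, hzK⟩
      · exact Or.inr fun hzb => hzK (Metric.ball_subset_closedBall hzb)
    have hmem : y ∈ (S ∩ K) ∪ (Metric.ball y (r/2))ᶜ :=
      hclosed.closure_subset ((closure_mono hsub) hy)
    have hyb : y ∈ Metric.ball y (r/2) := Metric.mem_ball_self (by linarith)
    rcases hmem with h | h
    · exact h.1
    · exact absurd hyb h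
  · right
    rw [frontier, hΩo.interior_eq]
    exact ⟨hyΩc, hyΩ⟩

/-- Enlarging a closed discrete subset of an open set `Ω ⊆ ℝ³` so that its closure in
`ℝ³` picks up exactly the boundary of `Ω`: if `A ⊆ Ω` is closed in `Ω` and discrete
(equivalently, every compact subset of `Ω` contains only finitely many points of `A`),
then there is `A'` with `A ⊆ A' ⊆ Ω`, closed in `Ω` and discrete, whose closure in `ℝ³`
equals `A' ∪ ∂Ω`. -/
theorem stmt15 (Ω : Set (EuclideanSpace ℝ (Fin 3)))
    (hΩo : IsOpen Ω) (hΩne : Ω.Nonempty)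
    (A : Set (EuclideanSpace ℝ (Fin 3))) (hAΩ : A ⊆ Ω)
    (hA : ∀ K : Set (EuclideanSpace ℝ (Fin 3)), K ⊆ Ω → IsCompact K → (A ∩ K).Finite) :
    ∃ A' : Set (EuclideanSpace ℝ (Fin 3)),
      A ⊆ A' ∧ A' ⊆ Ω ∧
      (∀ K : Set (EuclideanSpace ℝ (Fin 3)), K ⊆ Ω → IsCompact K → (A' ∩ K).Finite) ∧
      closure A' = A' ∪ frontier Ω := by
  by_cases hfr : frontier Ω = ∅
  · refine ⟨A, subset_rfl, hAΩ, hA, ?_⟩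
    have h : closure A ⊆ A ∪ frontier Ω := aux_closure (X := EuclideanSpace ℝ (Fin 3)) Ω A hΩo hAΩ hA
    rw [hfr, union_empty] at h
    rw [hfr, union_empty]
    exact subset_antisymm h subset_closure
  · have hfrne : (frontier Ω).Nonempty := nonempty_iff_ne_empty.2 hfr
    haveI : Nonempty (frontier Ω) := hfrne.to_subtype
    obtain ⟨d, hd⟩ := TopologicalSpace.exists_dense_seq (frontier Ω)
    have hchoice : ∀ k : ℕ, ∃ z ∈ Ω, dist ((d (Nat.unpair k).1 : EuclideanSpace ℝ (Fin 3))) z < 1/(k+1) := by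
      intro k
      have hm : ((d (Nat.unpair k).1 : EuclideanSpace ℝ (Fin 3))) ∈ closure Ω :=
        frontier_subset_closure (d (Nat.unpair k).1).2
      exact Metric.mem_closure_iff.1 hm _ (by positivity)
    choose x hxΩ hxd using hchoice
    have hfrc : frontier Ω ⊆ Ωᶜ := by
      rw [frontier, hΩo.interior_eq]; exact fun z hz => hz.2
    -- finiteness of (range x) ∩ K for compact K ⊆ Ω
    have hfinx : ∀ K : Set (EuclideanSpace ℝ (Fin 3)), K ⊆ Ω → IsCompact K → ((range x) ∩ K).Finite := by
      intro K hKΩ hKc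
      rcases K.eq_empty_or_nonempty with rfl | hKne
      · simp
      obtain ⟨y0, hy0K, hy0⟩ := hKc.exists_isMinOn hKne
        (Metric.continuous_infDist_pt (Ωᶜ)).continuousOn
      set δ := Metric.infDist y0 Ωᶜ with hδ
      have hδpos : 0 < δ := by
        have hy0Ω : y0 ∈ Ω := hKΩ hy0K
        have hcne : (Ωᶜ).Nonempty := hfrne.mono hfrc
        rw [hδ, ← hΩo.isClosed_compl.notMem_iff_infDist_pos hcne]
        simpa using hy0Ω
      have hsub : (range x) ∩ K ⊆ x '' {k : ℕ | k < ⌈1/δ⌉₊} := by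
        rintro z ⟨⟨k, rfl⟩, hzK⟩
        refine ⟨k, ?_, rfl⟩
        have h1 : δ ≤ Metric.infDist (x k) Ωᶜ := hy0 hzK
        have h2 : Metric.infDist (x k) Ωᶜ ≤ dist (x k) ((d (Nat.unpair k).1 : EuclideanSpace ℝ (Fin 3))) :=
          Metric.infDist_le_dist_of_mem (hfrc (d (Nat.unpair k).1).2)
        have h3 : dist (x k) ((d (Nat.unpair k).1 : EuclideanSpace ℝ (Fin 3))) < 1/(k+1) := by
          rw [dist_comm]; exact hxd k
        have hδk : δ < 1/(k+1) := lt_of_le_of_lt (h1.trans h2) h3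
        have hkδ : (k : ℝ) < 1/δ := by
          have hk1 : (0:ℝ) < (k:ℝ)+1 := by positivity
          rw [lt_div_iff₀ hk1] at hδk
          rw [lt_div_iff₀ hδpos]
          nlinarith
        exact Nat.lt_ceil.2 hkδ
      exact ((Set.finite_lt_nat _).image x).subset hsub
    have hfinA' : ∀ K : Set (EuclideanSpace ℝ (Fin 3)), K ⊆ Ω → IsCompact K → ((A ∪ range x) ∩ K).Finite := by
      intro K hKΩ hKc
      have hsplit : (A ∪ range x) ∩ K ⊆ (A ∩ K) ∪ ((range x) ∩ K) := by
        rintro z ⟨hz | hz, hzK⟩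
        exacts [Or.inl ⟨hz, hzK⟩, Or.inr ⟨hz, hzK⟩]
      exact ((hA K hKΩ hKc).union (hfinx K hKΩ hKc)).subset hsplit
    have hA'Ω : A ∪ range x ⊆ Ω := union_subset hAΩ (range_subset_iff.2 hxΩ)
    refine ⟨A ∪ range x, subset_union_left, hA'Ω, hfinA', ?_⟩
    refine subset_antisymm (aux_closure (X := EuclideanSpace ℝ (Fin 3)) Ω (A ∪ range x) hΩo hA'Ω hfinA') ?_
    apply union_subset subset_closure
    -- frontier Ω ⊆ closure (range x) ⊆ closure (A ∪ range x)
    intro b hb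
    apply closure_mono (subset_union_right : range x ⊆ A ∪ range x)
    rw [Metric.mem_closure_iff]
    intro ε hε
    -- find i with dist b (d i) < ε/2
    have hbmem : (⟨b, hb⟩ : frontier Ω) ∈ closure (range d) := hd _
    obtain ⟨c, ⟨i, rfl⟩, hc⟩ := Metric.mem_closure_iff.1 hbmem (ε/2) (by positivity)
    rw [Subtype.dist_eq] at hc
    obtain ⟨j, hj⟩ := exists_nat_one_div_lt (show (0:ℝ) < ε/2 by positivity)
    set k := Nat.pair i j with hk
    refine ⟨x k, mem_range_self k, ?_⟩
    have hup : (Nat.unpair k).1 = i := by rw [hk, Nat.unpair_pair]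
    have hdxk : dist ((d i : EuclideanSpace ℝ (Fin 3))) (x k) < 1/(k+1) := by
      have := hxd k; rwa [hup] at this
    have hjk : (1:ℝ)/(k+1) ≤ 1/(j+1) := by
      apply one_div_le_one_div_of_le (by positivity)
      have : j ≤ k := Nat.right_le_pair i j
      exact_mod_cast Nat.succ_le_succ this
    calc dist b (x k) ≤ dist b ((d i : EuclideanSpace ℝ (Fin 3))) + dist ((d i : EuclideanSpace ℝ (Fin 3))) (x k) := dist_triangle _ _ _
      _ < ε/2 + 1/(k+1) := add_lt_add_of_lt_of_le hc (le_of_lt hdxk)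
      _ ≤ ε/2 + 1/(j+1) := by linarith
      _ < ε/2 + ε/2 := by linarith
      _ = ε := by ring
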